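/- Let v ∈ ℝⁿ, m ∈ {0,1}ⁿ, q = softmax(v), and suppose indices j, k satisfy m_j = m_k = 1 and q_j > q_k. Perform one gradient ascent step on f(v) = mᵀ softmax(v) with step size β > 0: v'_i = v_i + β q_i (m_i − qᵀm). Assume qᵀm < 1. Let q' = softmax(v'). Then q'_j > q'_k and q'_j/q'_k > q_j/q_k. -/
import Mathlib


/-- softmax(v)_i = exp(v_i)/∑_k exp(v_k) -/
noncomputable def softmax {n : ℕ} (v : Fin n → ℝ) (i : Fin n) : ℝ :=
  Real.exp (v i) / ∑ k, Real.exp (v k)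

lemma softmax_pos {n : ℕ} (v : Fin n → ℝ) (i : Fin n) : 0 < softmax v i := by
  have hS : 0 < ∑ k, Real.exp (v k) :=
    Finset.sum_pos (fun k _ => Real.exp_pos _) ⟨i, Finset.mem_univ i⟩
  exact div_pos (Real.exp_pos _) hS

lemma softmax_div {n : ℕ} (v : Fin n → ℝ) (i j : Fin n) :
    softmax v i / softmax v j = Real.exp (v i - v j) := by
  have hS : (0:ℝ) < ∑ k, Real.exp (v k) :=
    Finset.sum_pos (fun k _ => Real.exp_pos _) ⟨i, Finset.mem_univ i⟩
  rw [softmax, softmax, Real.exp_sub]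
  field_simp

/-- One gradient ascent step on f(v) = mᵀ softmax(v) with step size β > 0:
    if m_j = m_k = 1 and q_j > q_k with qᵀm < 1, then q'_j > q'_k and
    q'_j/q'_k > q_j/q_k. -/
theorem single_step_amplification {n : ℕ} (v : Fin n → ℝ) (m : Fin n → ℝ)
    (hm : ∀ i, m i = 0 ∨ m i = 1) (j k : Fin n)
    (hmj : m j = 1) (hmk : m k = 1)
    (hq : softmax v j > softmax v k)
    (β : ℝ) (hβ : 0 < β)
    (hqm : ∑ u, softmax v u * m u < 1)
    (v' : Fin n → ℝ)
    (hv' : ∀ i, v' i = v i + β * softmax v i * (m i - ∑ u, softmax v u * m u)) :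
    softmax v' j > softmax v' k ∧
    softmax v' j / softmax v' k > softmax v j / softmax v k := by
  set t := ∑ u, softmax v u * m u with ht
  have hdiff : v' j - v' k = (v j - v k) + β * (softmax v j - softmax v k) * (1 - t) := by
    rw [hv' j, hv' k, hmj, hmk]; ring
  have hpos : 0 < β * (softmax v j - softmax v k) * (1 - t) := by
    apply mul_pos (mul_pos hβ (by linarith)) (by linarith)
  have hlt : v k - v j < v' j - v' k + (v k - v j) - (v j - v k) := by
    rw [hdiff]; ring_nf; linarith [hdiff]
  have hgt : v j - v k < v' j - v' k := by rw [hdiff]; linarith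
  constructor
  · have h1 : softmax v' k / softmax v' j < softmax v j / softmax v j := by
      rw [softmax_div, div_self (ne_of_gt (softmax_pos v j))]
      calc Real.exp (v' k - v' j) < Real.exp (v k - v j) := by
            apply Real.exp_lt_exp.mpr; linarith
        _ ≤ 1 := by
            rw [Real.exp_le_one_iff]
            have := softmax_div v k j
            have h2 : softmax v k / softmax v j < 1 :=
              (div_lt_one (softmax_pos v j)).mpr hq
            rw [this] at h2
            exact le_of_lt (Real.exp_lt_one_iff.mp h2)
    have := (div_lt_one (softmax_pos v' j)).mp (by
      rwa [div_self (ne_of_gt (softmax_pos v j))] at h1)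
    linarith
  · rw [softmax_div, softmax_div]
    exact Real.exp_lt_exp.mpr hgt
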